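/- arXiv:2009.03809 — 5 statements merged into one kernel-verified Lean document; each statement's English description precedes it below -/
import Mathlib

section
/- For every graph G, every s ∈ ℕ≥1 ∪ {∞}, and every k ∈ ℕ: G has no (k+1,s)-edge-hide-out if and only if G has a layout of s-edge-degeneracy at most k (i.e., δ_e^s(G) ≤ k). -/
/-- A walk in a multigraph given by its endpoint function `ends`:
`IsWalk ends u w l` means `l` is the list of edges of a walk from `u` to `w`. -/
inductive IsWalk {V E : Type*} (ends : E → Sym2 V) : V → V → List E → Prop
  | nil (v : V) : IsWalk ends v v []
  | cons {u v w : V} {e : E} {l : List E} :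
      ends e = s(u, v) → IsWalk ends v w l → IsWalk ends u w (e :: l)

/-- `EdgeSep ends s x S A` : the edge set `A` meets every walk of length at most `s`
from `x` to a vertex of `S`. -/
def EdgeSep {V E : Type*} (ends : E → Sym2 V) (s : ℕ∞) (x : V) (S : Set V) (A : Set E) : Prop :=
  ∀ y ∈ S, ∀ l : List E, IsWalk ends x y l → (l.length : ℕ∞) ≤ s → ∃ e ∈ l, e ∈ A

/-- A `(k,s)`-edge-hide-out: every edge set separating a vertex `x ∈ R` from `R \ {x}`
(at distance `s`) has at least `k` edges. -/
def IsHideout {V E : Type*} (ends : E → Sym2 V) (s : ℕ∞) (k : ℕ) (R : Set V) : Prop :=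
  ∀ x ∈ R, ∀ A : Set E, EdgeSep ends s x (R \ {x}) A → k ≤ A.ncard

/-- `G` admits a layout of `s`-edge-degeneracy at most `k`. -/
def LayoutWidthLE {V E : Type*} (ends : E → Sym2 V) (s : ℕ∞) (k : ℕ) : Prop :=
  ∃ (n : ℕ) (L : Fin n ≃ V), ∀ i : Fin n,
    ∃ A : Set E, A.ncard ≤ k ∧ EdgeSep ends s (L i) {v | ∃ j, j < i ∧ L j = v} A

/-- The `s`-edge-degeneracy `δ_e^s(G)`. -/
noncomputable def edgeDeg {V E : Type*} (ends : E → Sym2 V) (s : ℕ∞) : ℕ :=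
  sInf {k | LayoutWidthLE ends s k}

/-- The edge-degree of a vertex (parallel edges counted with multiplicity). -/
noncomputable def degE {V E : Type*} (ends : E → Sym2 V) (v : V) : ℕ :=
  {e : E | v ∈ ends e}.ncard

/-!
A nonempty set `R` fails to be a `(k+1,s)`-hide-out exactly when some `x ∈ R` has
`supp_{G,s}(x, R \ {x}) ≤ k`. Peeling such vertices off `V` one at a time, from the back, yields
a layout of `s`-edge-degeneracy at most `k`. Conversely, in such a layout the last vertex `x` of
`R` has all of `R \ {x}` among its predecessors, and support only shrinks with the target set.
Neither direction uses anything about support beyond this monotonicity.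
-/

open Set Function

theorem Fin.image_snoc_Iio_castSucc {α : Type*} {m : ℕ} (f : Fin m → α) (x : α) (i : Fin m) :
    Fin.snoc f x '' Iio i.castSucc = f '' Iio i := by
  rw [← Fin.image_castSucc_Iio, image_image]
  simp

theorem Fin.image_snoc_Iio_last {α : Type*} {m : ℕ} (f : Fin m → α) (x : α) :
    Fin.snoc f x '' Iio (Fin.last m) = range f := by
  ext v
  simp [Fin.exists_fin_succ', Fin.castSucc_lt_last]

section Peeling

variable {V : Type*} (P : V → Set V → Prop)

theorem exists_injective_peeling [Finite V]
    (h : ∀ R : Set V, R.Nonempty → ∃ x ∈ R, P x (R \ {x})) {n : ℕ} {R : Set V}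
    (hR : R.ncard = n) :
    ∃ f : Fin n → V, Injective f ∧ range f = R ∧ ∀ i, P (f i) (f '' Iio i) := by
  induction n generalizing R with
  | zero =>
    refine ⟨Fin.elim0, injective_of_subsingleton _, ?_, fun i => i.elim0⟩
    rw [range_eq_empty, eq_comm, ← ncard_eq_zero, hR]
  | succ m ih =>
    obtain ⟨x, hxR, hx⟩ := h R (nonempty_of_ncard_ne_zero (by omega))
    obtain ⟨f, hf_inj, hf_range, hf⟩ :=
      ih (R := R \ {x}) (by rw [ncard_sdiff_singleton_of_mem hxR, hR]; rfl)
    have hx_notMem : x ∉ range f := by simp [hf_range]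
    refine ⟨Fin.snoc f x, Fin.snoc_injective_of_injective hf_inj hx_notMem, ?_, ?_⟩
    · rw [Fin.range_snoc, hf_range, insert_sdiff_singleton, insert_eq_of_mem hxR]
    · intro i
      induction i using Fin.lastCases with
      | last => simpa [Fin.image_snoc_Iio_last, hf_range] using hx
      | cast i => simpa [Fin.image_snoc_Iio_castSucc] using hf i

theorem exists_equiv_peeling [Finite V]
    (h : ∀ R : Set V, R.Nonempty → ∃ x ∈ R, P x (R \ {x})) :
    ∃ (n : ℕ) (L : Fin n ≃ V), ∀ i, P (L i) (L '' Iio i) := by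
  obtain ⟨f, hf_inj, hf_range, hf⟩ := exists_injective_peeling P h (R := univ) rfl
  exact ⟨_, .ofBijective f ⟨hf_inj, range_eq_univ.mp hf_range⟩, hf⟩

theorem exists_mem_peeling_of_equiv (hP : ∀ x, Antitone (P x)) {n : ℕ} (L : Fin n ≃ V)
    (hL : ∀ i, P (L i) (L '' Iio i)) {R : Set V} (hR : R.Nonempty) :
    ∃ x ∈ R, P x (R \ {x}) := by
  have : Finite V := .of_equiv _ L
  obtain ⟨x, hxR, hx_last⟩ := R.exists_max_image L.symm R.toFinite hR
  have hR_pred : R \ {x} ⊆ L '' Iio (L.symm x) := by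
    rintro y ⟨hyR, hyx⟩
    exact ⟨L.symm y, (hx_last y hyR).lt_of_ne (L.symm.injective.ne hyx), L.apply_symm_apply y⟩
  have hx := hL (L.symm x)
  rw [L.apply_symm_apply] at hx
  exact ⟨x, hxR, hP x hR_pred hx⟩

end Peeling

section Support

variable {V E : Type*} (ends : E → Sym2 V) (s : ℕ∞) (k : ℕ)

/-- `supp_{G,s}(x, S) ≤ k`. -/
def SuppLE (x : V) (S : Set V) : Prop :=
  ∃ A : Set E, A.ncard ≤ k ∧ EdgeSep ends s x S A

variable {ends s k}

theorem suppLE_antitone (x : V) : Antitone (SuppLE ends s k x) :=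
  fun _ _ hS ⟨A, hA, hsep⟩ => ⟨A, hA, fun y hy => hsep y (hS hy)⟩

theorem not_isHideout_iff {R : Set V} :
    ¬ IsHideout ends s (k + 1) R ↔ ∃ x ∈ R, SuppLE ends s k x (R \ {x}) := by
  simp only [IsHideout, SuppLE, Nat.succ_le_iff, not_forall, not_lt, exists_prop, and_comm]

theorem layoutWidthLE_iff : LayoutWidthLE ends s k ↔
    ∃ (n : ℕ) (L : Fin n ≃ V), ∀ i, SuppLE ends s k (L i) (L '' Iio i) :=
  Iff.rfl

end Support

theorem no_hideout_iff_layout_general {V E : Type*} [Finite V] (ends : E → Sym2 V) (s : ℕ∞) (k : ℕ) :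
    (∀ R : Set V, R.Nonempty → ¬ IsHideout ends s (k + 1) R) ↔ LayoutWidthLE ends s k := by
  simp only [not_isHideout_iff, layoutWidthLE_iff]
  exact ⟨exists_equiv_peeling (SuppLE ends s k), fun ⟨_, L, hL⟩ _ hR =>
    exists_mem_peeling_of_equiv (SuppLE ends s k) suppLE_antitone L hL hR⟩

/-- min-max theorem: `G` has no (nonempty) `(k+1,s)`-edge-hide-out iff `G` has a
layout of `s`-edge-degeneracy at most `k`, i.e. `δ_e^s(G) ≤ k`. -/
theorem no_hideout_iff_layout {V E : Type*} [Finite V] [Finite E]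
    (ends : E → Sym2 V) (hloopless : ∀ e, ¬ (ends e).IsDiag)
    (s : ℕ∞) (hs : 1 ≤ s) (k : ℕ) :
    (∀ R : Set V, R.Nonempty → ¬ IsHideout ends s (k + 1) R) ↔ LayoutWidthLE ends s k :=
  no_hideout_iff_layout_general ends s k
end

section
/- If a graph G contains a nonempty (k+1,s)-edge-hide-out S, then the robber has a winning escape strategy against every cop strategy of cost at most k in the edge-blocking cops-and-robber game with robber speed s; hence cc_s(G) ≥ k+1. -/
/-- `Reach ends s F u w` : there is a walk of length at most `s` from `u` to `w`
avoiding all blocked edges in `F`. -/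
def Reach {V E : Type*} (ends : E → Sym2 V) (s : ℕ∞) (F : Set E) (u w : V) : Prop :=
  ∃ l : List E, IsWalk ends u w l ∧ (∀ e ∈ l, e ∉ F) ∧ (l.length : ℕ∞) ≤ s

/-- A valid robber strategy: when the robber can move to another vertex along an unblocked
path of length at most `s`, he does so; otherwise he stays put (and is captured). -/
def ValidRobber {V E : Type*} (ends : E → Sym2 V) (s : ℕ∞) (g : Set E → V → V) : Prop :=
  ∀ (F : Set E) (v : V),
    ((∃ u, u ≠ v ∧ Reach ends s F v u) → (g F v ≠ v ∧ Reach ends s F v (g F v))) ∧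
    ((¬ ∃ u, u ≠ v ∧ Reach ends s F v u) → g F v = v)

/-- The game scenario generated by the cop strategy `f` and the robber strategy `(v₀, g)`:
`scenario f g v₀ i` is the robber's position after round `i`. -/
def scenario {V E : Type*} (f : V → Set E) (g : Set E → V → V) (v₀ : V) : ℕ → V
  | 0 => v₀
  | i + 1 => g (f (scenario f g v₀ i)) (scenario f g v₀ i)

/-- The capture cost `cc_s(G)` against a robber of speed `s`: the least `k` such that some
cop strategy of cost at most `k` captures every valid robber. -/
noncomputable def captureCost {V E : Type*} (ends : E → Sym2 V) (s : ℕ∞) : ℕ :=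
  sInf {k | ∃ f : V → Set E, (∀ v, (f v).ncard ≤ k) ∧
    ∀ (v₀ : V) (g : Set E → V → V), ValidRobber ends s g →
      ∃ i, scenario f g v₀ (i + 1) = scenario f g v₀ i}

/-!
Fewer than `k` blocked edges never separate a vertex of a `(k,s)`-edge-hide-out `S` from the
rest of `S`, so a robber standing in `S` can always move, within speed `s`, to another vertex
of `S`. Playing this way forever, he is never caught by cops of cost `< k`. For the bound on
`cc_s`, note that the set of winning costs is nonempty: blocking every edge freezes any robber.
-/

section

variable {V E : Type*}

open Classical in
noncomputable def hideoutRobber (ends : E → Sym2 V) (s : ℕ∞) (S : Set V) (F : Set E) (v : V) :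
    V :=
  if h : ∃ u ∈ S, u ≠ v ∧ Reach ends s F v u then h.choose
  else if h' : ∃ u, u ≠ v ∧ Reach ends s F v u then h'.choose else v

variable {ends : E → Sym2 V} {s : ℕ∞}

theorem hideoutRobber_spec {S : Set V} {F : Set E} {v : V}
    (h : ∃ u ∈ S, u ≠ v ∧ Reach ends s F v u) :
    hideoutRobber ends s S F v ∈ S ∧ hideoutRobber ends s S F v ≠ v ∧
      Reach ends s F v (hideoutRobber ends s S F v) := by
  rw [hideoutRobber, dif_pos h]
  exact h.choose_spec

theorem validRobber_hideoutRobber (S : Set V) : ValidRobber ends s (hideoutRobber ends s S) := by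
  intro F v
  by_cases hS : ∃ u ∈ S, u ≠ v ∧ Reach ends s F v u
  · have hmove := (hideoutRobber_spec hS).2
    exact ⟨fun _ => hmove, fun hstuck => absurd ⟨_, hmove⟩ hstuck⟩
  · constructor
    · intro h
      rw [hideoutRobber, dif_neg hS, dif_pos h]
      exact h.choose_spec
    · intro h
      rw [hideoutRobber, dif_neg hS, dif_neg h]

theorem IsHideout.exists_reach {k : ℕ} {S : Set V} (hS : IsHideout ends s k S) {v : V}
    (hv : v ∈ S) {F : Set E} (hF : F.ncard < k) : ∃ u ∈ S, u ≠ v ∧ Reach ends s F v u := by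
  by_contra! h
  refine hF.not_ge (hS v hv F fun y hy l hl hlen => ?_)
  by_contra! hfree
  exact h y hy.1 hy.2 ⟨l, hl, hfree, hlen⟩

theorem scenario_mem {f : V → Set E} {g : Set E → V → V} {S : Set V} {v₀ : V} (hv₀ : v₀ ∈ S)
    (hS : ∀ v ∈ S, g (f v) v ∈ S) : ∀ i, scenario f g v₀ i ∈ S
  | 0 => hv₀
  | i + 1 => hS _ (scenario_mem hv₀ hS i)

theorem IsHideout.scenario_succ_ne {k : ℕ} {S : Set V} (hS : IsHideout ends s k S)
    {f : V → Set E} (hf : ∀ v, (f v).ncard < k) {v₀ : V} (hv₀ : v₀ ∈ S) (i : ℕ) :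
    scenario f (hideoutRobber ends s S) v₀ (i + 1) ≠ scenario f (hideoutRobber ends s S) v₀ i := by
  have step (v : V) (hv : v ∈ S) :
      hideoutRobber ends s S (f v) v ∈ S ∧ hideoutRobber ends s S (f v) v ≠ v :=
    (hideoutRobber_spec (hS.exists_reach hv (hf v))).imp_right And.left
  exact (step _ (scenario_mem hv₀ (fun v hv => (step v hv).1) i)).2

theorem eq_of_reach_univ {u w : V} (h : Reach ends s Set.univ u w) : u = w := by
  obtain ⟨l, hl, hfree, -⟩ := h
  cases hl with
  | nil => rfl
  | cons _ _ => exact absurd (Set.mem_univ _) (hfree _ List.mem_cons_self)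

theorem ValidRobber.apply_univ {g : Set E → V → V} (hg : ValidRobber ends s g) (v : V) :
    g Set.univ v = v :=
  (hg _ v).2 fun ⟨_, hu, hreach⟩ => hu (eq_of_reach_univ hreach).symm

theorem le_captureCost_of_escapes {k : ℕ}
    (h : ∀ f : V → Set E, (∀ v, (f v).ncard ≤ k) →
      ∃ (v₀ : V) (g : Set E → V → V), ValidRobber ends s g ∧
        ∀ i, scenario f g v₀ (i + 1) ≠ scenario f g v₀ i) :
    k + 1 ≤ captureCost ends s := by
  refine le_csInf ⟨Nat.card E, fun _ => Set.univ, fun _ => (Set.ncard_univ E).le,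
    fun v₀ g hg => ⟨0, hg.apply_univ v₀⟩⟩ fun m ⟨f, hf, hcapture⟩ => ?_
  by_contra! hlt
  obtain ⟨v₀, g, hg, hescape⟩ := h f fun v => (hf v).trans (Nat.le_of_lt_succ hlt)
  obtain ⟨i, hi⟩ := hcapture v₀ g hg
  exact hescape i hi

end

theorem robber_wins_of_hideout_general {V E : Type*}
    (ends : E → Sym2 V)
    (s : ℕ∞) (k : ℕ)
    (S : Set V) (hSne : S.Nonempty) (hS : IsHideout ends s (k + 1) S) :
    (∀ f : V → Set E, (∀ v, (f v).ncard ≤ k) →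
      ∃ (v₀ : V) (g : Set E → V → V), ValidRobber ends s g ∧
        ∀ i, scenario f g v₀ (i + 1) ≠ scenario f g v₀ i) ∧
    k + 1 ≤ captureCost ends s := by
  have escapes (f : V → Set E) (hf : ∀ v, (f v).ncard ≤ k) :
      ∃ (v₀ : V) (g : Set E → V → V), ValidRobber ends s g ∧
        ∀ i, scenario f g v₀ (i + 1) ≠ scenario f g v₀ i :=
    ⟨hSne.some, hideoutRobber ends s S, validRobber_hideoutRobber S,
      hS.scenario_succ_ne (fun v => Nat.lt_succ_of_le (hf v)) hSne.some_mem⟩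
  exact ⟨escapes, le_captureCost_of_escapes escapes⟩

/-- if `G` contains a nonempty `(k+1,s)`-edge-hide-out then, against every cop
strategy of cost at most `k`, the robber has a valid escape strategy that is never captured;
hence `cc_s(G) ≥ k+1`. -/
theorem robber_wins_of_hideout {V E : Type*} [Finite V] [Finite E]
    (ends : E → Sym2 V) (hloopless : ∀ e, ¬ (ends e).IsDiag)
    (s : ℕ∞) (hs : 1 ≤ s) (k : ℕ)
    (S : Set V) (hSne : S.Nonempty) (hS : IsHideout ends s (k + 1) S) :
    (∀ f : V → Set E, (∀ v, (f v).ncard ≤ k) →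
      ∃ (v₀ : V) (g : Set E → V → V), ValidRobber ends s g ∧
        ∀ i, scenario f g v₀ (i + 1) ≠ scenario f g v₀ i) ∧
    k + 1 ≤ captureCost ends s :=
  robber_wins_of_hideout_general ends s k S hSne hS
end

section
/- If a graph G admits a layout of s-edge-degeneracy at most k, then the cops have a winning strategy of cost at most k in the edge-blocking cops-and-robber game with robber speed s; hence cc_s(G) ≤ δ_e^s(G). -/
theorem cops_main {V E : Type*}
    (ends : E → Sym2 V) (s : ℕ∞) (k : ℕ) (h : LayoutWidthLE ends s k) :
    ∃ f : V → Set E, (∀ v, (f v).ncard ≤ k) ∧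
      ∀ (v₀ : V) (g : Set E → V → V), ValidRobber ends s g →
        ∃ i, scenario f g v₀ (i + 1) = scenario f g v₀ i := by
  obtain ⟨n, L, hL⟩ := h
  choose A hcard hsep using hL
  refine ⟨fun v => A (L.symm v), fun v => hcard _, ?_⟩
  intro v₀ g hg
  by_contra hcon
  push_neg at hcon
  set σ := scenario (fun v => A (L.symm v)) g v₀ with hσ
  have key : ∀ i, L.symm (σ i) < L.symm (σ (i + 1)) := by
    intro i
    set v := σ i with hv
    have hne : g (A (L.symm v)) v ≠ v := hcon i
    have hmove : ∃ u, u ≠ v ∧ Reach ends s (A (L.symm v)) v u := by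
      by_contra hno
      exact hne ((hg _ v).2 hno)
    obtain ⟨hne', hreach⟩ := (hg _ v).1 hmove
    obtain ⟨l, hwalk, havoid, hlen⟩ := hreach
    set u := g (A (L.symm v)) v with hu
    have hstep : σ (i + 1) = u := rfl
    have hnotlt : ¬ L.symm u < L.symm v := by
      intro hlt
      obtain ⟨e, hel, heA⟩ := hsep (L.symm v) u ⟨L.symm u, hlt, L.apply_symm_apply u⟩ l
        (by rw [Equiv.apply_symm_apply]; exact hwalk) hlen
      exact havoid e hel heA
    have hne2 : L.symm v ≠ L.symm u := by
      intro hcontra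
      exact hne' (by simpa using (congrArg L hcontra).symm)
    rw [hstep]
    exact lt_of_le_of_ne (not_lt.mp hnotlt) hne2
  have hmono : StrictMono (fun i => ((L.symm (σ i) : Fin n) : ℕ)) :=
    strictMono_nat_of_lt_succ fun i => key i
  have h2 : ∀ m : ℕ, m ≤ ((L.symm (σ m) : Fin n) : ℕ) := fun m => hmono.le_apply
  exact absurd (h2 n) (not_le.mpr (Fin.is_lt _))

/-- if `G` has a layout of `s`-edge-degeneracy at most `k`, then the cops have a
winning strategy of cost at most `k`; hence `cc_s(G) ≤ δ_e^s(G)`. -/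
theorem cops_win_of_layout {V E : Type*} [Finite V] [Finite E]
    (ends : E → Sym2 V) (hloopless : ∀ e, ¬ (ends e).IsDiag)
    (s : ℕ∞) (hs : 1 ≤ s) (k : ℕ) (h : LayoutWidthLE ends s k) :
    (∃ f : V → Set E, (∀ v, (f v).ncard ≤ k) ∧
      ∀ (v₀ : V) (g : Set E → V → V), ValidRobber ends s g →
        ∃ i, scenario f g v₀ (i + 1) = scenario f g v₀ i) ∧
    captureCost ends s ≤ edgeDeg ends s := by
  refine ⟨cops_main ends s k h, ?_⟩
  have hmem : LayoutWidthLE ends s (edgeDeg ends s) := Nat.sInf_mem (⟨k, h⟩ : {k | LayoutWidthLE ends s k}.Nonempty)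
  exact Nat.sInf_le (cops_main ends s _ hmem)
end

section
/- If H is a subgraph of G, then δ_e^s(H) ≤ δ_e^s(G) for every s ∈ ℕ≥1 ∪ {∞}. -/
/- A layout of `G` restricts to a layout of `H`, ordering the vertices of `H` as their images
appear in the layout of `G`. If `A` meets every short walk in `G` from `v` to the earlier
vertices, then the edges of `H` mapped into `A` meet every short walk in `H` from `v` to its earlier
vertices, since such a walk maps to a short walk of `G`; and there are no more of them than `|A|`. -/

lemma Set.ncard_preimage_le_of_injective {α β : Type*} {f : α → β} (hf : f.Injective)
    {A : Set β} (hA : A.Finite) : (f ⁻¹' A).ncard ≤ A.ncard :=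
  calc (f ⁻¹' A).ncard = (f '' (f ⁻¹' A)).ncard := (Set.ncard_image_of_injective _ hf).symm
    _ ≤ A.ncard := Set.ncard_le_ncard (Set.image_preimage_subset f A) hA

lemma exists_equiv_fin_strictMono_comp {α β : Type*} [Finite α] [LinearOrder β] {g : α → β}
    (hg : g.Injective) : ∃ (m : ℕ) (L : Fin m ≃ α), StrictMono (g ∘ L) := by
  let _ : LinearOrder α := LinearOrder.lift' g hg
  cases nonempty_fintype α
  exact ⟨_, (monoEquivOfFin α rfl).toEquiv, (monoEquivOfFin α rfl).strictMono⟩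

section Subgraph

variable {V' E' V E : Type*} {ends' : E' → Sym2 V'} {ends : E → Sym2 V}
  {fV : V' → V} {fE : E' → E}

lemma IsWalk.map (hsub : ∀ e, ends (fE e) = (ends' e).map fV) {u w : V'} {l : List E'}
    (h : IsWalk ends' u w l) : IsWalk ends (fV u) (fV w) (l.map fE) := by
  induction h with
  | nil v => exact IsWalk.nil (fV v)
  | cons he _ ih => exact IsWalk.cons (by rw [hsub, he, Sym2.map_mk]) ih

lemma EdgeSep.comap (hsub : ∀ e, ends (fE e) = (ends' e).map fV) {s : ℕ∞} {x : V'}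
    {S : Set V'} {T : Set V} {A : Set E} (hA : EdgeSep ends s (fV x) T A) (hST : S ⊆ fV ⁻¹' T) :
    EdgeSep ends' s x S (fE ⁻¹' A) := by
  intro y hy l hl hlen
  obtain ⟨_, he, heA⟩ := hA (fV y) (hST hy) _ (hl.map hsub) (by simpa using hlen)
  obtain ⟨e, hel, rfl⟩ := List.mem_map.mp he
  exact ⟨e, hel, heA⟩

lemma LayoutWidthLE.comap [Finite V'] [Finite E] (hfV : fV.Injective) (hfE : fE.Injective)
    (hsub : ∀ e, ends (fE e) = (ends' e).map fV) {s : ℕ∞} {k : ℕ}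
    (h : LayoutWidthLE ends s k) : LayoutWidthLE ends' s k := by
  obtain ⟨n, L, hL⟩ := h
  obtain ⟨m, L', hmono⟩ := exists_equiv_fin_strictMono_comp (L.symm.injective.comp hfV)
  refine ⟨m, L', fun i => ?_⟩
  obtain ⟨A, hAk, hA⟩ := hL (L.symm (fV (L' i)))
  rw [L.apply_symm_apply] at hA
  refine ⟨fE ⁻¹' A, (Set.ncard_preimage_le_of_injective hfE A.toFinite).trans hAk,
    hA.comap hsub ?_⟩
  rintro _ ⟨j, hj, rfl⟩
  exact ⟨L.symm (fV (L' j)), hmono hj, L.apply_symm_apply _⟩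

end Subgraph

lemma EdgeSep.univ {V E : Type*} {ends : E → Sym2 V} {s : ℕ∞} {x : V} {S : Set V}
    (hx : x ∉ S) : EdgeSep ends s x S Set.univ := by
  rintro y hy l hl -
  cases hl with
  | nil => exact absurd hy hx
  | cons => exact ⟨_, List.mem_cons_self, trivial⟩

lemma layoutWidthLE_edgeDeg {V E : Type*} [Finite V] (ends : E → Sym2 V) (s : ℕ∞) :
    LayoutWidthLE ends s (edgeDeg ends s) := by
  refine Nat.sInf_mem (s := {k | LayoutWidthLE ends s k}) ⟨(Set.univ : Set E).ncard, ?_⟩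
  cases nonempty_fintype V
  refine ⟨_, (Fintype.equivFin V).symm, fun i => ⟨Set.univ, le_rfl, EdgeSep.univ ?_⟩⟩
  rintro ⟨j, hj, hji⟩
  exact hj.ne ((Fintype.equivFin V).symm.injective hji)

theorem edgeDeg_mono_subgraph_general {V' E' V E : Type*} [Finite V] [Finite E]
    (ends' : E' → Sym2 V') (ends : E → Sym2 V)
    (fV : V' ↪ V) (fE : E' ↪ E)
    (hsub : ∀ e : E', ends (fE e) = (ends' e).map fV)
    (s : ℕ∞) :
    edgeDeg ends' s ≤ edgeDeg ends s :=
  have : Finite V' := .of_injective fV fV.injective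
  Nat.sInf_le ((layoutWidthLE_edgeDeg ends s).comap fV.injective fE.injective hsub)

/-- if `H` is a subgraph of `G` then `δ_e^s(H) ≤ δ_e^s(G)` for every `s`. -/
theorem edgeDeg_mono_subgraph {V' E' V E : Type*} [Finite V'] [Finite E'] [Finite V] [Finite E]
    (ends' : E' → Sym2 V') (ends : E → Sym2 V)
    (hl' : ∀ e, ¬ (ends' e).IsDiag) (hl : ∀ e, ¬ (ends e).IsDiag)
    (fV : V' ↪ V) (fE : E' ↪ E)
    (hsub : ∀ e : E', ends (fE e) = (ends' e).map fV)
    (s : ℕ∞) (hs : 1 ≤ s) :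
    edgeDeg ends' s ≤ edgeDeg ends s :=
  edgeDeg_mono_subgraph_general ends' ends fV fE hsub s
end

section
/- Let G be a graph with a tree-partition D = (T, B) of adhesion at most k. If θ_{k+1} is an immersion of G, then θ_{k+1} is an immersion of some torso Z_t of D. -/
/-- The multigraph `θ_k`: two vertices joined by `k` parallel edges. -/
def thetaEnds (k : ℕ) : Fin k → Sym2 (Fin 2) := fun _ => s(0, 1)

/-- `H` is an immersion of `G`: an injection of the vertices of `H` into those of `G`
together with pairwise edge-disjoint trails of `G` realizing the edges of `H`. -/
def Immersion {V' E' V E : Type*} (ends' : E' → Sym2 V') (ends : E → Sym2 V) : Prop :=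
  ∃ (φ : V' ↪ V) (P : E' → List E),
    (∀ e : E', ∃ u v : V', ends' e = s(u, v) ∧ IsWalk ends (φ u) (φ v) (P e) ∧ (P e).Nodup) ∧
    ∀ e f : E', e ≠ f → ∀ x ∈ P e, x ∉ P f

/-- The neighbour of `t` towards `x` in the tree `T`: the second vertex of the unique
path from `t` to `x`. -/
noncomputable def towards {τ : Type*} (T : SimpleGraph τ) (hT : T.IsTree) (t x : τ) : τ :=
  ((hT.existsUnique_path t x).choose).getVert 1

/- The vertex map defining the `t`-torso of the tree-partition `β : V → τ`:
vertices of the bag of `t` are kept, all other vertices are identified with the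
satellite corresponding to the component of `T ∖ t` containing their bag. -/
open Classical in
noncomputable def torsoMap {V τ : Type*} (T : SimpleGraph τ) (hT : T.IsTree) (β : V → τ)
    (t : τ) : V → V ⊕ τ :=
  fun v => if β v = t then Sum.inl v else Sum.inr (towards T hT t (β v))

/-- The edges of the `t`-torso: edges of `G` whose two endpoints are not identified. -/
def torsoEdges {V E τ : Type*} (ends : E → Sym2 V) (T : SimpleGraph τ) (hT : T.IsTree)
    (β : V → τ) (t : τ) : Set E :=
  {e : E | ¬ ((ends e).map (torsoMap T hT β t)).IsDiag}

/-- The endpoint function of the `t`-torso `Z_t`. -/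
noncomputable def torsoEnds {V E τ : Type*} (ends : E → Sym2 V) (T : SimpleGraph τ)
    (hT : T.IsTree) (β : V → τ) (t : τ) :
    torsoEdges ends T hT β t → Sym2 (V ⊕ τ) :=
  fun e => (ends e.1).map (torsoMap T hT β t)

/-- The degree of a vertex of the `t`-torso. -/
noncomputable def torsoDeg {V E τ : Type*} (ends : E → Sym2 V) (T : SimpleGraph τ)
    (hT : T.IsTree) (β : V → τ) (t : τ) (w : V ⊕ τ) : ℕ :=
  {e : torsoEdges ends T hT β t | w ∈ torsoEnds ends T hT β t e}.ncard

/-- The side of `a` in the bipartition of the tree `T` obtained by deleting the edge `ab`. -/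
def treeSide {τ : Type*} (T : SimpleGraph τ) (a b : τ) : Set τ :=
  {x | (T.deleteEdges {s(a, b)}).Reachable a x}

/-- The tree-partition `β` of `G` has adhesion at most `k`: for every tree edge `ab`,
at most `k` edges of `G` cross the corresponding bipartition of `V(G)`. -/
def AdhesionLE {V E τ : Type*} (ends : E → Sym2 V) (T : SimpleGraph τ) (β : V → τ)
    (k : ℕ) : Prop :=
  ∀ a b : τ, T.Adj a b →
    {e : E | ∃ u v, ends e = s(u, v) ∧ β u ∈ treeSide T a b ∧ β v ∉ treeSide T a b}.ncard ≤ k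

/-!
Take `t` to be the bag of the branch vertex `φ 0` of the immersion. Contracting `G` onto the
`t`-torso keeps `φ 0` as a vertex of its own, so the two branch vertices stay distinct, and
every trail of `G` is sent to a trail of `Z_t` using a subset of its edges (the edges that get
contracted to loops are dropped). Hence edge-disjoint trails stay edge-disjoint.
-/

section Contraction

variable {V W E : Type*} {ends : E → Sym2 V}

theorem IsWalk.exists_map {a b : V} {l : List E} (f : V → W) (h : IsWalk ends a b l) :
    ∃ l' : List {e // ¬((ends e).map f).IsDiag},
      IsWalk (fun e => (ends e.1).map f) (f a) (f b) l' ∧ (l'.map Subtype.val).Sublist l := by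
  induction h with
  | nil v => exact ⟨[], IsWalk.nil _, List.nil_sublist _⟩
  | @cons u v w e l he _ ih =>
    obtain ⟨l', hw, hsub⟩ := ih
    by_cases hfuv : f u = f v
    · exact ⟨l', hfuv ▸ hw, hsub.trans (List.sublist_cons_self e l)⟩
    · have he' : ¬((ends e).map f).IsDiag := by simpa [he] using hfuv
      exact ⟨⟨e, he'⟩ :: l', IsWalk.cons (by simp [he]) hw, hsub.cons_cons e⟩

theorem Immersion.map {V' E' : Type*} {ends' : E' → Sym2 V'} (f : V → W)
    (φ : V' ↪ V) (hφ : Function.Injective (f ∘ φ)) (P : E' → List E)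
    (hP : ∀ e, ∃ u v, ends' e = s(u, v) ∧ IsWalk ends (φ u) (φ v) (P e) ∧ (P e).Nodup)
    (hdisj : ∀ e e', e ≠ e' → ∀ x ∈ P e, x ∉ P e') :
    Immersion ends' (fun e : {e // ¬((ends e).map f).IsDiag} => (ends e.1).map f) := by
  choose u v hends hwalk hnodup using hP
  choose L hL hsub using fun e => (hwalk e).exists_map f
  refine ⟨⟨f ∘ φ, hφ⟩, L, fun e => ⟨u e, v e, hends e, hL e, ?_⟩, ?_⟩
  · exact ((hsub e).nodup (hnodup e)).of_map _
  · intro e e' hee' x hx hx'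
    exact hdisj e e' hee' x.1 ((hsub e).subset (List.mem_map_of_mem hx))
      ((hsub e').subset (List.mem_map_of_mem hx'))

end Contraction

theorem eq_of_torsoMap_eq {V τ : Type*} (T : SimpleGraph τ) (hT : T.IsTree) (β : V → τ)
    {v w : V} (h : torsoMap T hT β (β v) w = torsoMap T hT β (β v) v) : w = v := by
  unfold torsoMap at h
  split_ifs at h with hw <;> simp_all

theorem theta_immersion_of_torso_general {V E τ : Type*}
    (ends : E → Sym2 V)
    (T : SimpleGraph τ) (hT : T.IsTree) (β : V → τ) (k : ℕ)
    (him : Immersion (thetaEnds (k + 1)) ends) :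
    ∃ t : τ, Immersion (thetaEnds (k + 1)) (torsoEnds ends T hT β t) := by
  obtain ⟨φ, P, hP, hdisj⟩ := him
  -- the `t`-torso is by definition the contraction along `torsoMap T hT β t`
  refine ⟨β (φ 0), Immersion.map (torsoMap T hT β (β (φ 0))) φ ?_ P hP hdisj⟩
  have h10 : torsoMap T hT β (β (φ 0)) (φ 1) ≠ torsoMap T hT β (β (φ 0)) (φ 0) :=
    fun h => absurd (φ.injective (eq_of_torsoMap_eq T hT β h)) (by decide)
  intro i j hij
  fin_cases i <;> fin_cases j
  all_goals first | rfl | exact absurd hij h10 | exact absurd hij.symm h10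

/-- if `G` has a tree-partition of adhesion at most `k` and `θ_{k+1}` is an
immersion of `G`, then `θ_{k+1}` is an immersion of some torso `Z_t`. -/
theorem theta_immersion_of_torso {V E τ : Type*} [Finite V] [Finite E] [Finite τ]
    (ends : E → Sym2 V) (hloopless : ∀ e, ¬ (ends e).IsDiag)
    (T : SimpleGraph τ) (hT : T.IsTree) (β : V → τ) (k : ℕ)
    (hadh : AdhesionLE ends T β k)
    (him : Immersion (thetaEnds (k + 1)) ends) :
    ∃ t : τ, Immersion (thetaEnds (k + 1)) (torsoEnds ends T hT β t) :=
  theta_immersion_of_torso_general ends T hT β k him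
end
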